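/- Let R be a commutative ring and S a multiplicative subset consisting of non-zero-divisors. If R is u-S-semisimple, then R is semisimple. Consequently, for regular S, R is u-S-semisimple if and only if R is semisimple. -/

import Mathlib

/-!
An `R`-linear `f : R → I` satisfies `f i = i · f 1`. For `I = (s²)` this gives `s² · f 1 = s³`,
so `f 1 = s` after cancelling the non-zero-divisor `s²`, and `f 1 ∈ (s²)` makes `s` a unit.
Then `s⁻¹ f` is a retraction of `R` onto any ideal, so every ideal is a direct summand.
Conversely, in a semisimple ring the projections onto ideals work with `s = 1`.
-/

universe u

/-- `R` is a `u`-`S`-semisimple ring: there is a uniform `s ∈ S` such that every ideal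
`I` admits `f : R → I` with `f(i) = s·i` for all `i ∈ I`. -/
def IsUSSemisimpleRing {R : Type u} [CommRing R] (S : Submonoid R) : Prop :=
  ∃ s ∈ S, ∀ I : Ideal R, ∃ f : R →ₗ[R] I, ∀ i ∈ I, ((f i : R)) = s * i

section

variable {R : Type*} [CommRing R]

theorem LinearMap.ideal_apply_eq_mul {I : Ideal R} (f : R →ₗ[R] I) (r : R) :
    (f r : R) = r * f 1 := by
  rw [← smul_eq_mul, ← Submodule.coe_smul, ← f.map_smul, smul_eq_mul, mul_one]

theorem isUnit_of_mem_nonZeroDivisors_of_span_sq {s : R} (hs : s ∈ nonZeroDivisors R)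
    (f : R →ₗ[R] Ideal.span {s * s}) (hf : ∀ i ∈ Ideal.span {s * s}, (f i : R) = s * i) :
    IsUnit s := by
  obtain ⟨c, hc⟩ := Ideal.mem_span_singleton'.mp (f 1).2
  have hf1 : (f 1 : R) = s := by
    have h := hf (s * s) (Ideal.mem_span_singleton_self _)
    rw [f.ideal_apply_eq_mul, mul_comm s (s * s)] at h
    exact (mul_cancel_left_mem_nonZeroDivisors (mul_mem hs hs)).mp h
  have hcs : s * (c * s) = s * 1 := by
    rw [mul_one, ← mul_assoc, mul_comm s c, mul_assoc, hc, hf1]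
  exact .of_mul_eq_one_right c ((mul_cancel_left_mem_nonZeroDivisors hs).mp hcs)

theorem isSemisimpleModule_of_isUnit_of_forall_smul_retraction {M : Type*} [AddCommGroup M]
    [Module R M] {s : R} (hs : IsUnit s)
    (h : ∀ N : Submodule R M, ∃ f : M →ₗ[R] N, ∀ x ∈ N, (f x : M) = s • x) :
    IsSemisimpleModule R M := by
  refine (isSemisimpleModule_iff R M).mpr ⟨fun N ↦ ?_⟩
  obtain ⟨f, hf⟩ := h N
  refine ⟨_, LinearMap.isCompl_of_proj (f := (↑hs.unit⁻¹ : R) • f) fun x ↦ ?_⟩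
  ext
  simp [hf x x.2, smul_smul]

theorem IsSemisimpleModule.exists_retraction {M : Type*} [AddCommGroup M] [Module R M]
    [IsSemisimpleModule R M] (N : Submodule R M) : ∃ f : M →ₗ[R] N, ∀ x ∈ N, (f x : M) = x := by
  obtain ⟨N', hN'⟩ := exists_isCompl N
  exact ⟨N.projectionOnto N' hN', fun x hx ↦ congrArg Subtype.val
    (Submodule.projectionOnto_apply_left hN' ⟨x, hx⟩)⟩

end

theorem uS_semisimple_ring_iff_semisimple_of_regular
    {R : Type u} [CommRing R] (S : Submonoid R)
    (hreg : (S : Set R) ⊆ (nonZeroDivisors R : Set R)) :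
    IsUSSemisimpleRing S ↔ IsSemisimpleRing R := by
  constructor
  · rintro ⟨s, hsS, h⟩
    obtain ⟨f, hf⟩ := h (Ideal.span {s * s})
    exact isSemisimpleModule_of_isUnit_of_forall_smul_retraction
      (isUnit_of_mem_nonZeroDivisors_of_span_sq (hreg hsS) f hf) h
  · intro _
    refine ⟨1, S.one_mem, fun I ↦ ?_⟩
    simpa only [one_mul] using IsSemisimpleModule.exists_retraction I
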